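/- arXiv:1604.05588 — 4 statements merged into one kernel-verified Lean document; each statement's English description precedes it below -/
import Mathlib

section
/- Consider variables x₁,…,x_k and a₁,…,a_k (k ≥ 1) and the 'ring' formula consisting, for each i (indices mod k), of the clauses {aᵢ, xᵢ}, {¬aᵢ, ¬xᵢ}, and {xᵢ, a_{i+1}}, {¬xᵢ, ¬a_{i+1}}. Then every satisfying assignment of this formula assigns the same truth value to all xᵢ and the opposite truth value to all aᵢ. -/
/-- A literal is a sign together with a variable; `(true, v)` is the positive
literal `v` and `(false, v)` is the negative literal `¬v`. -/
abbrev Lit (V : Type*) := Bool × V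

/-- A clause is a finite set of literals. -/
abbrev Clause (V : Type*) := Finset (Lit V)

/-- An assignment satisfies a clause if it makes at least one literal true. -/
def SatClause {V : Type*} (σ : V → Bool) (C : Clause V) : Prop :=
  ∃ l ∈ C, σ l.2 = l.1

/-- An assignment satisfies a CNF formula (a collection of clauses) if it
satisfies every clause. -/
def Sat {V : Type*} (σ : V → Bool) (F : Set (Clause V)) : Prop :=
  ∀ C ∈ F, SatClause σ C

/-- A formula is satisfiable if some assignment satisfies it. -/
def Satisfiable {V : Type*} (F : Set (Clause V)) : Prop :=
  ∃ σ, Sat σ F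

/-- A variable occurs (positively or negatively) in a clause. -/
def VarInClause {V : Type*} (v : V) (C : Clause V) : Prop :=
  (true, v) ∈ C ∨ (false, v) ∈ C

/-- A variable occurs in a formula. -/
def VarInFormula {V : Type*} (v : V) (F : Set (Clause V)) : Prop :=
  ∃ C ∈ F, VarInClause v C

/-- Variables of the ring gadget: `Sum.inl i` is the variable `xᵢ` and
`Sum.inr i` is the variable `aᵢ`, indices taken in `ZMod k` (cyclically). -/
abbrev RingVar (k : ℕ) := ZMod k ⊕ ZMod k

/-- The ring formula: for each `i` (mod `k`) the clauses
`{aᵢ, xᵢ}`, `{¬aᵢ, ¬xᵢ}`, `{xᵢ, a_{i+1}}`, `{¬xᵢ, ¬a_{i+1}}`. -/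
def RingFormula (k : ℕ) : Set (Clause (RingVar k)) :=
  ⋃ i : ZMod k,
    {({(true, Sum.inr i), (true, Sum.inl i)} : Clause (RingVar k)),
     {(false, Sum.inr i), (false, Sum.inl i)},
     {(true, Sum.inl i), (true, Sum.inr (i + 1))},
     {(false, Sum.inl i), (false, Sum.inr (i + 1))}}

lemma two_clause_neg {V : Type*} [DecidableEq V] (σ : V → Bool) (u v : V)
    (h1 : SatClause σ ({(true, u), (true, v)} : Clause V))
    (h2 : SatClause σ ({(false, u), (false, v)} : Clause V)) :
    σ u = ! σ v := by
  obtain ⟨l, hl, hval⟩ := h1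
  obtain ⟨m, hm, hmval⟩ := h2
  simp only [Finset.mem_insert, Finset.mem_singleton] at hl hm
  rcases hl with rfl | rfl <;> rcases hm with rfl | rfl <;>
    simp_all <;> cases hu : σ u <;> cases hv : σ v <;> simp_all

/-- Every satisfying assignment of the ring formula (for `k ≥ 1`) assigns the
same truth value to all `xᵢ` and the opposite truth value to all `aᵢ`. -/
theorem ring_gadget_forces_equal (k : ℕ) (hk : 1 ≤ k) (σ : RingVar k → Bool)
    (hσ : Sat σ (RingFormula k)) :
    (∀ i j : ZMod k, σ (Sum.inl i) = σ (Sum.inl j)) ∧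
    (∀ i : ZMod k, σ (Sum.inr i) = ! σ (Sum.inl i)) := by
  have mem1 : ∀ i : ZMod k, ({(true, Sum.inr i), (true, Sum.inl i)} : Clause (RingVar k)) ∈ RingFormula k := by
    intro i; exact Set.mem_iUnion.2 ⟨i, by simp⟩
  have mem2 : ∀ i : ZMod k, ({(false, Sum.inr i), (false, Sum.inl i)} : Clause (RingVar k)) ∈ RingFormula k := by
    intro i; exact Set.mem_iUnion.2 ⟨i, by simp⟩
  have mem3 : ∀ i : ZMod k, ({(true, Sum.inl i), (true, Sum.inr (i+1))} : Clause (RingVar k)) ∈ RingFormula k := by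
    intro i; exact Set.mem_iUnion.2 ⟨i, by simp⟩
  have mem4 : ∀ i : ZMod k, ({(false, Sum.inl i), (false, Sum.inr (i+1))} : Clause (RingVar k)) ∈ RingFormula k := by
    intro i; exact Set.mem_iUnion.2 ⟨i, by simp⟩
  have ha : ∀ i : ZMod k, σ (Sum.inr i) = ! σ (Sum.inl i) := fun i =>
    two_clause_neg σ _ _ (hσ _ (mem1 i)) (hσ _ (mem2 i))
  have hx : ∀ i : ZMod k, σ (Sum.inl i) = ! σ (Sum.inr (i+1)) := fun i =>
    two_clause_neg σ _ _ (hσ _ (mem3 i)) (hσ _ (mem4 i))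
  have hstep : ∀ i : ZMod k, σ (Sum.inl (i+1)) = σ (Sum.inl i) := by
    intro i
    rw [hx i, ha (i+1), Bool.not_not]
  have hnat : ∀ n : ℕ, σ (Sum.inl (n : ZMod k)) = σ (Sum.inl 0) := by
    intro n
    induction n with
    | zero => simp
    | succ m ih => push_cast; rw [hstep, ih]
  refine ⟨fun i j => ?_, ha⟩
  have hi := hnat i.val
  have hj := hnat j.val
  haveI : NeZero k := ⟨by omega⟩
  rw [ZMod.natCast_val, ZMod.cast_id] at hi hj
  rw [hi, hj]
end

section
/- Let F be a CNF formula in which a variable x appears, with clauses containing x at positions replaced as follows: introduce fresh variables x₁,…,x_k, a₁,…,a_k (where k is the number of appearances of x), add the ring clauses {aᵢ,xᵢ}, {¬aᵢ,¬xᵢ}, {xᵢ,a_{i+1}}, {¬xᵢ,¬a_{i+1}} for all i mod k, and in the i-th clause of F containing x, replace a positive occurrence of x by xᵢ and a negative occurrence ¬x by aᵢ (positive). Then the resulting formula is satisfiable if and only if F is satisfiable. -/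
/-- Extended variable type: original variables plus the fresh ring variables
`xᵢ = Sum.inr (false, i)` and `aᵢ = Sum.inr (true, i)`, `i : ZMod k`. -/
abbrev ExtVar (V : Type*) (k : ℕ) := V ⊕ (Bool × ZMod k)

/-- The fresh variable `xᵢ`. -/
def xV {V : Type*} {k : ℕ} (i : ZMod k) : ExtVar V k := Sum.inr (false, i)

/-- The fresh variable `aᵢ`. -/
def aV {V : Type*} {k : ℕ} (i : ZMod k) : ExtVar V k := Sum.inr (true, i)

/-- Lift a clause over `V` to a clause over the extended variables. -/
def liftClause {V : Type*} [DecidableEq V] {k : ℕ} (C : Clause V) :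
    Clause (ExtVar V k) :=
  C.image (fun l => (l.1, Sum.inl l.2))

/-- The ring clauses `{aᵢ,xᵢ}`, `{¬aᵢ,¬xᵢ}`, `{xᵢ,a_{i+1}}`, `{¬xᵢ,¬a_{i+1}}`,
indices mod `k`. -/
def RingClauses (V : Type*) [DecidableEq V] (k : ℕ) : Set (Clause (ExtVar V k)) :=
  ⋃ i : ZMod k,
    {({(true, aV i), (true, xV i)} : Clause (ExtVar V k)),
     {(false, aV i), (false, xV i)},
     {(true, xV i), (true, aV (i + 1))},
     {(false, xV i), (false, aV (i + 1))}}

/-- The `i`-th clause containing `x`, after replacing a positive occurrence of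
`x` by `xᵢ` and a negative occurrence `¬x` by the positive literal `aᵢ`. -/
def replaceClause {V : Type*} [DecidableEq V] {k : ℕ} (x : V)
    (D : ZMod k → Clause V) (i : ZMod k) : Clause (ExtVar V k) :=
  if (true, x) ∈ D i then
    liftClause ((D i).erase (true, x)) ∪ {(true, xV i)}
  else
    liftClause ((D i).erase (false, x)) ∪ {(true, aV i)}

/-- **Correctness of the ring-gadget variable replacement.**  Let a formula
consist of clauses `F₀` not containing `x` together with `k ≥ 1` clauses
`D i` each containing `x` (with exactly one sign).  Replacing the occurrence of
`x` in `D i` by `xᵢ` (if positive) or `aᵢ` (if negative) and adding the ring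
clauses yields an equisatisfiable formula. -/
theorem ring_replacement_equisatisfiable {V : Type*} [DecidableEq V] (k : ℕ)
    (hk : 1 ≤ k) (x : V) (F₀ : Set (Clause V)) (D : ZMod k → Clause V)
    (hF₀ : ∀ C ∈ F₀, ¬ VarInClause x C)
    (hD : ∀ i, ((true, x) ∈ D i ∧ (false, x) ∉ D i) ∨
               ((false, x) ∈ D i ∧ (true, x) ∉ D i)) :
    Satisfiable (F₀ ∪ {C | ∃ i, C = D i}) ↔
      Satisfiable ((liftClause '' F₀) ∪ {C | ∃ i, C = replaceClause x D i} ∪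
        RingClauses V k) := by
  haveI : NeZero k := ⟨by omega⟩
  constructor
  · rintro ⟨σ, hσ⟩
    refine ⟨Sum.elim σ (fun p => xor p.1 (σ x)), ?_⟩
    rintro C ((⟨C₀, hC₀, rfl⟩ | ⟨i, rfl⟩) | hC)
    · obtain ⟨l, hl, hσl⟩ := hσ C₀ (Or.inl hC₀)
      exact ⟨(l.1, Sum.inl l.2), Finset.mem_image_of_mem _ hl, by simpa using hσl⟩
    · obtain ⟨l, hl, hσl⟩ := hσ (D i) (Or.inr ⟨i, rfl⟩)
      unfold replaceClause
      split_ifs with hpos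
      · by_cases hlx : l = (true, x)
        · subst hlx
          refine ⟨(true, xV i), Finset.mem_union_right _ (Finset.mem_singleton_self _), ?_⟩
          simp [xV, hσl]
        · refine ⟨(l.1, Sum.inl l.2), Finset.mem_union_left _
            (Finset.mem_image_of_mem _ (Finset.mem_erase.mpr ⟨hlx, hl⟩)), by simpa using hσl⟩
      · have hneg : (false, x) ∈ D i := by
          rcases hD i with ⟨h1, _⟩ | ⟨h1, _⟩
          · exact absurd h1 hpos
          · exact h1
        by_cases hlx : l = (false, x)
        · subst hlx
          refine ⟨(true, aV i), Finset.mem_union_right _ (Finset.mem_singleton_self _), ?_⟩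
          simp [aV, hσl]
        · refine ⟨(l.1, Sum.inl l.2), Finset.mem_union_left _
            (Finset.mem_image_of_mem _ (Finset.mem_erase.mpr ⟨hlx, hl⟩)), by simpa using hσl⟩
    · simp only [RingClauses, Set.mem_iUnion] at hC
      obtain ⟨i, hC⟩ := hC
      simp only [Set.mem_insert_iff, Set.mem_singleton_iff] at hC
      rcases hC with rfl | rfl | rfl | rfl <;>
        · simp only [SatClause, xV, aV, Finset.mem_insert, Finset.mem_singleton]
          cases hsx : σ x <;> simp
  · rintro ⟨τ, hτ⟩
    have hring : ∀ i : ZMod k, ∀ C ∈ ({({(true, aV i), (true, xV i)} : Clause (ExtVar V k)),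
        {(false, aV i), (false, xV i)},
        {(true, xV i), (true, aV (i + 1))},
        {(false, xV i), (false, aV (i + 1))}} : Set (Clause (ExtVar V k))),
        SatClause τ C := by
      intro i C hC
      exact hτ C (Or.inr (Set.mem_iUnion.mpr ⟨i, hC⟩))
    have hax : ∀ i : ZMod k, τ (aV i) = !τ (xV i) := by
      intro i
      have d1 := hring i {(true, aV i), (true, xV i)} (by simp)
      have d2 := hring i {(false, aV i), (false, xV i)} (by simp)
      simp only [SatClause, Finset.mem_insert, Finset.mem_singleton] at d1 d2
      obtain ⟨l1, hl1, hv1⟩ := d1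
      obtain ⟨l2, hl2, hv2⟩ := d2
      rcases hl1 with rfl | rfl <;> rcases hl2 with rfl | rfl <;> simp_all
    have hxa : ∀ i : ZMod k, τ (aV (i + 1)) = !τ (xV i) := by
      intro i
      have d1 := hring i {(true, xV i), (true, aV (i + 1))} (by simp)
      have d2 := hring i {(false, xV i), (false, aV (i + 1))} (by simp)
      simp only [SatClause, Finset.mem_insert, Finset.mem_singleton] at d1 d2
      obtain ⟨l1, hl1, hv1⟩ := d1
      obtain ⟨l2, hl2, hv2⟩ := d2
      rcases hl1 with rfl | rfl <;> rcases hl2 with rfl | rfl <;> simp_all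
    have hxx : ∀ i : ZMod k, τ (xV (i + 1)) = τ (xV i) := by
      intro i
      have h1 := hax (i + 1)
      have h2 := hxa i
      rw [h2] at h1
      exact (Bool.not_inj h1.symm)
    have hconst : ∀ i : ZMod k, τ (xV i) = τ (xV (0 : ZMod k)) := by
      have key : ∀ n : ℕ, τ (xV ((n : ZMod k))) = τ (xV (0 : ZMod k)) := by
        intro n
        induction n with
        | zero => simp
        | succ n ih => rw [Nat.cast_add, Nat.cast_one, hxx, ih]
      intro i
      obtain ⟨n, rfl⟩ := ZMod.natCast_rightInverse.surjective i
      exact key n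
    refine ⟨fun v => if v = x then τ (xV (0 : ZMod k)) else τ (Sum.inl v), ?_⟩
    rintro C (hC | ⟨i, rfl⟩)
    · obtain ⟨l, hl, hv⟩ := hτ (liftClause C) (Or.inl (Or.inl ⟨C, hC, rfl⟩))
      obtain ⟨l₀, hl₀, rfl⟩ := Finset.mem_image.mp hl
      have hne : l₀.2 ≠ x := by
        intro h
        apply hF₀ C hC
        obtain ⟨b, v⟩ := l₀
        subst h
        cases b
        · exact Or.inr hl₀
        · exact Or.inl hl₀
      exact ⟨l₀, hl₀, by simpa [hne] using hv⟩
    · obtain ⟨l, hl, hv⟩ := hτ (replaceClause x D i) (Or.inl (Or.inr ⟨i, rfl⟩))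
      unfold replaceClause at hl
      rcases hD i with ⟨ht, hf⟩ | ⟨hf, ht⟩
      · rw [if_pos ht] at hl
        rcases Finset.mem_union.mp hl with hl' | hl'
        · obtain ⟨l₀, hl₀, rfl⟩ := Finset.mem_image.mp hl'
          have hl₀' := Finset.mem_erase.mp hl₀
          have hne : l₀.2 ≠ x := by
            intro h
            obtain ⟨b, v⟩ := l₀
            subst h
            cases b
            · exact hf hl₀'.2
            · exact hl₀'.1 rfl
          exact ⟨l₀, hl₀'.2, by simpa [hne] using hv⟩
        · rw [Finset.mem_singleton] at hl'
          subst hl'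
          refine ⟨(true, x), ht, ?_⟩
          simp only [if_pos rfl]
          rw [← hconst i]
          exact hv
      · rw [if_neg ht] at hl
        rcases Finset.mem_union.mp hl with hl' | hl'
        · obtain ⟨l₀, hl₀, rfl⟩ := Finset.mem_image.mp hl'
          have hl₀' := Finset.mem_erase.mp hl₀
          have hne : l₀.2 ≠ x := by
            intro h
            obtain ⟨b, v⟩ := l₀
            subst h
            cases b
            · exact hl₀'.1 rfl
            · exact ht hl₀'.2
          exact ⟨l₀, hl₀'.2, by simpa [hne] using hv⟩
        · rw [Finset.mem_singleton] at hl'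
          subst hl'
          refine ⟨(false, x), hf, ?_⟩
          simp only [if_pos rfl]
          have h1 := hax i
          rw [hv] at h1
          rw [hconst i] at h1
          simp at h1
          simp [h1]
end

section
/- If F is a CNF formula over variables V and x ∈ V, and a,b,c,d are fresh variables not in V, then F is satisfiable if and only if F ∪ {{x,a,b}, {a,c,d}, {b,c,d}, {a,b}, {¬a,¬b}, {c,d}, {¬c,¬d}} is satisfiable. -/
/-- The E4-padding gadget: for a formula `F` over variables `Vars`, `x ∈ Vars`
and pairwise distinct fresh variables `a, b, c, d`, `F` is satisfiable iff
`F ∪ {{x,a,b}, {a,c,d}, {b,c,d}, {a,b}, {¬a,¬b}, {c,d}, {¬c,¬d}}` is. -/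
theorem e4_padding_gadget {V : Type*} [DecidableEq V]
    (F : Set (Clause V)) (Vars : Set V)
    (hF : ∀ C ∈ F, ∀ l ∈ C, l.2 ∈ Vars)
    (x a b c d : V) (hx : x ∈ Vars)
    (ha : a ∉ Vars) (hb : b ∉ Vars) (hc : c ∉ Vars) (hd : d ∉ Vars)
    (hab : a ≠ b) (hac : a ≠ c) (had : a ≠ d) (hbc : b ≠ c) (hbd : b ≠ d)
    (hcd : c ≠ d) :
    Satisfiable F ↔
      Satisfiable (F ∪
        {({(true, x), (true, a), (true, b)} : Clause V),
         {(true, a), (true, c), (true, d)},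
         {(true, b), (true, c), (true, d)},
         {(true, a), (true, b)}, {(false, a), (false, b)},
         {(true, c), (true, d)}, {(false, c), (false, d)}}) := by

  constructor
  · rintro ⟨σ, hσ⟩
    refine ⟨fun v => if v = a then true else if v = b then false
      else if v = c then true else if v = d then false else σ v, ?_⟩
    intro C hC
    rcases hC with hC | hC
    · obtain ⟨l, hl, hls⟩ := hσ C hC
      refine ⟨l, hl, ?_⟩
      have hv := hF C hC l hl
      have h1 : l.2 ≠ a := fun h => ha (h ▸ hv)
      have h2 : l.2 ≠ b := fun h => hb (h ▸ hv)
      have h3 : l.2 ≠ c := fun h => hc (h ▸ hv)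
      have h4 : l.2 ≠ d := fun h => hd (h ▸ hv)
      simp [h1, h2, h3, h4, hls]
    · simp only [Set.mem_insert_iff, Set.mem_singleton_iff] at hC
      rcases hC with rfl | rfl | rfl | rfl | rfl | rfl | rfl
      · exact ⟨(true, a), by simp, by simp⟩
      · exact ⟨(true, a), by simp, by simp⟩
      · exact ⟨(true, c), by simp [hcd, Ne.symm hbc, Ne.symm hac]⟩
      · exact ⟨(true, a), by simp, by simp⟩
      · exact ⟨(false, b), by simp, by simp [Ne.symm hab]⟩
      · exact ⟨(true, c), by simp [hcd, Ne.symm hbc, Ne.symm hac]⟩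
      · exact ⟨(false, d), by simp, by simp [Ne.symm had, Ne.symm hbd, Ne.symm hcd]⟩
  · rintro ⟨σ, hσ⟩
    exact ⟨σ, fun C hC => hσ C (Set.mem_union_left _ hC)⟩
end

section
/- The bipartite incidence graph of the clause set R₁({x,y}) = {{x,y,u}, {x,y,v}, {x,y,w}, {¬u,¬v,¬w}}—with one vertex per variable in {x,y,u,v,w}, one vertex per clause, and an edge whenever a variable occurs (positively or negatively) in a clause—contains K_{3,3} as a minor, and hence is not planar. -/
/-- `H` is a minor of `G`: there is a family of nonempty, pairwise disjoint,
connected branch sets in `G`, one for each vertex of `H`, such that every edge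
of `H` is realized by an edge of `G` between the corresponding branch sets. -/
def SimpleGraph.IsMinorOf {β α : Type*} (H : SimpleGraph β) (G : SimpleGraph α) : Prop :=
  ∃ B : β → Set α,
    (∀ b, (B b).Nonempty) ∧
    (Pairwise fun b₁ b₂ => Disjoint (B b₁) (B b₂)) ∧
    (∀ b, (G.induce (B b)).Connected) ∧
    ∀ ⦃b₁ b₂⦄, H.Adj b₁ b₂ → ∃ u ∈ B b₁, ∃ v ∈ B b₂, G.Adj u v

/-- Planarity, via Wagner's characterization: a graph is planar iff it has
neither `K₅` nor `K₃,₃` as a minor. -/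
def SimpleGraph.IsPlanar {α : Type*} (G : SimpleGraph α) : Prop :=
  ¬ (completeGraph (Fin 5)).IsMinorOf G ∧
  ¬ (completeBipartiteGraph (Fin 3) (Fin 3)).IsMinorOf G

/-- The bipartite variable–clause incidence graph of a formula: one vertex per
variable, one vertex per clause, with an edge whenever the variable occurs
(positively or negatively) in the clause. -/
def IncidenceGraph {V : Type*} (F : Set (Clause V)) : SimpleGraph (V ⊕ F) where
  Adj p q :=
    (∃ v C, p = Sum.inl v ∧ q = Sum.inr C ∧ VarInClause v (C : Clause V)) ∨
    (∃ v C, q = Sum.inl v ∧ p = Sum.inr C ∧ VarInClause v (C : Clause V))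
  symm := by
    constructor
    rintro p q (⟨v, C, h1, h2, h3⟩ | ⟨v, C, h1, h2, h3⟩)
    · exact Or.inr ⟨v, C, h1, h2, h3⟩
    · exact Or.inl ⟨v, C, h1, h2, h3⟩
  loopless := by
    constructor
    rintro p (⟨v, C, rfl, h2, -⟩ | ⟨v, C, rfl, h2, -⟩) <;> exact Sum.inl_ne_inr h2

/-- The clause set `R₁({x,y}) = {{x,y,u}, {x,y,v}, {x,y,w}, {¬u,¬v,¬w}}` over
the variables `x = 0`, `y = 1`, `u = 2`, `v = 3`, `w = 4`. -/
def R1Gadget : Set (Clause (Fin 5)) :=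
  {({(true, 0), (true, 1), (true, 2)} : Clause (Fin 5)),
   {(true, 0), (true, 1), (true, 3)},
   {(true, 0), (true, 1), (true, 4)},
   {(false, 2), (false, 3), (false, 4)}}


namespace SimpleGraph

variable {α β : Type*} {G : SimpleGraph α} {H : SimpleGraph β}

theorem isMinorOf_of_connected_fiber (φ : α → β) (hconn : ∀ b, (G.induce (φ ⁻¹' {b})).Connected)
    (hlift : ∀ ⦃b₁ b₂⦄, H.Adj b₁ b₂ → ∃ u v, G.Adj u v ∧ φ u = b₁ ∧ φ v = b₂) :
    H.IsMinorOf G := by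
  refine ⟨fun b => φ ⁻¹' {b}, fun b => nonempty_subtype.mp (hconn b).nonempty,
    fun b₁ b₂ hne => (Set.disjoint_singleton.mpr hne).preimage φ, hconn, fun b₁ b₂ hadj => ?_⟩
  obtain ⟨u, v, huv, rfl, rfl⟩ := hlift hadj
  exact ⟨u, rfl, v, rfl, huv⟩

theorem induce_fiber_connected_of_star (φ : α → β) (c : β → α) (hc : ∀ b, φ (c b) = b)
    (hstar : ∀ x, x ≠ c (φ x) → G.Adj (c (φ x)) x) (b : β) :
    (G.induce (φ ⁻¹' {b})).Connected := by
  let center : φ ⁻¹' {b} := ⟨c b, hc b⟩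
  have hreach : ∀ x, (G.induce (φ ⁻¹' {b})).Reachable center x := by
    rintro ⟨x, hx : φ x = b⟩
    by_cases hxc : x = c b
    · subst hxc; rfl
    · have hadj : G.Adj (c b) x := hx ▸ hstar x (by rwa [hx])
      exact (induce_adj.mpr hadj : (G.induce _).Adj center ⟨x, hx⟩).reachable
  have : Nonempty (φ ⁻¹' {b}) := ⟨center⟩
  exact ⟨fun x y => (hreach x).symm.trans (hreach y)⟩

end SimpleGraph

instance {V : Type*} [DecidableEq V] (v : V) (C : Clause V) : Decidable (VarInClause v C) :=
  inferInstanceAs (Decidable (_ ∨ _))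

theorem incidenceGraph_adj_inr_inl {V : Type*} {F : Set (Clause V)} {C : F} {v : V} :
    (IncidenceGraph F).Adj (.inr C) (.inl v) ↔ VarInClause v (C : Clause V) := by
  simp [IncidenceGraph]

namespace R1Gadget

def posClause (j : Fin 3) : R1Gadget :=
  ⟨{(true, 0), (true, 1), (true, Fin.natAdd 2 j)}, by fin_cases j <;> simp [R1Gadget]⟩

def negClause : R1Gadget :=
  ⟨{(false, 2), (false, 3), (false, 4)}, by simp [R1Gadget]⟩

theorem eq_posClause_or_eq_negClause (C : R1Gadget) :
    (∃ j, C = posClause j) ∨ C = negClause := by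
  obtain ⟨C, hC⟩ := C
  simp only [R1Gadget, Set.mem_insert_iff, Set.mem_singleton_iff] at hC
  rcases hC with rfl | rfl | rfl | rfl
  exacts [.inl ⟨0, rfl⟩, .inl ⟨1, rfl⟩, .inl ⟨2, rfl⟩, .inr rfl]

/-- Contracting `u`, `v`, `w` into the clause `¬u ∨ ¬v ∨ ¬w` leaves `x`, `y` and that vertex,
each joined to all three positive clauses: a `K₃,₃`. -/
def contraction : Fin 5 ⊕ R1Gadget → Fin 3 ⊕ Fin 3
  | .inl v => ![.inl 0, .inl 1, .inl 2, .inl 2, .inl 2] v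
  | .inr C =>
    if (false, 2) ∈ C.1 then .inl 2
    else if (true, 2) ∈ C.1 then .inr 0
    else if (true, 3) ∈ C.1 then .inr 1
    else .inr 2

def center : Fin 3 ⊕ Fin 3 → Fin 5 ⊕ R1Gadget
  | .inl i => ![.inl 0, .inl 1, .inr negClause] i
  | .inr j => .inr (posClause j)

theorem contraction_center (b : Fin 3 ⊕ Fin 3) : contraction (center b) = b := by
  rcases b with i | j
  · fin_cases i <;> decide
  · fin_cases j <;> decide

theorem adj_center_contraction (x : Fin 5 ⊕ R1Gadget) (hx : x ≠ center (contraction x)) :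
    (IncidenceGraph R1Gadget).Adj (center (contraction x)) x := by
  rcases x with v | C
  · fin_cases v
    all_goals first
      | exact absurd rfl hx
      | exact incidenceGraph_adj_inr_inl.mpr (by decide)
  · rcases eq_posClause_or_eq_negClause C with ⟨j, rfl⟩ | rfl
    · fin_cases j <;> exact absurd (by decide) hx
    · exact absurd (by decide) hx

theorem exists_lift_adj (i j : Fin 3) : ∃ u v, (IncidenceGraph R1Gadget).Adj u v ∧
    contraction u = .inl i ∧ contraction v = .inr j := by
  refine ⟨.inl (![0, 1, Fin.natAdd 2 j] i), .inr (posClause j), ?_, ?_, ?_⟩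
  · exact (incidenceGraph_adj_inr_inl.mpr (by fin_cases i <;> fin_cases j <;> decide)).symm
  all_goals fin_cases i <;> fin_cases j <;> decide

theorem completeBipartiteGraph_isMinorOf_incidenceGraph :
    (completeBipartiteGraph (Fin 3) (Fin 3)).IsMinorOf (IncidenceGraph R1Gadget) := by
  refine SimpleGraph.isMinorOf_of_connected_fiber contraction
    (SimpleGraph.induce_fiber_connected_of_star contraction center contraction_center
      adj_center_contraction) ?_
  rintro (i | i) (j | j) hadj
  · simp at hadj
  · exact exists_lift_adj i j
  · obtain ⟨u, v, huv, hu, hv⟩ := exists_lift_adj j i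
    exact ⟨v, u, huv.symm, hv, hu⟩
  · simp at hadj

end R1Gadget

/-- The bipartite incidence graph of `R₁({x,y})` contains `K₃,₃` as a minor
and hence is not planar. -/
theorem r1_gadget_not_planar :
    (completeBipartiteGraph (Fin 3) (Fin 3)).IsMinorOf (IncidenceGraph R1Gadget) ∧
    ¬ (IncidenceGraph R1Gadget).IsPlanar :=
  ⟨R1Gadget.completeBipartiteGraph_isMinorOf_incidenceGraph,
    fun hplanar => hplanar.2 R1Gadget.completeBipartiteGraph_isMinorOf_incidenceGraph⟩
end
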